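/- Let G be a block graph with a cut vertex v satisfying C(G \ {v}) = { S \ {v} : S ∈ C(G), v ∈ S }, and let H = G_v \ {v}. Then C(H) = { S ∈ C(G) : v ∉ S and N_G(v) ⊄ S }. -/
import Mathlib


variable {V : Type} [Fintype V] [DecidableEq V]

/-- The number of connected components of the induced subgraph of `G` on `A`. -/
noncomputable def comps (G : SimpleGraph V) (A : Set V) : ℕ :=
  Nat.card ((G.induce A).ConnectedComponent)

/-- `v` is a cut vertex of `G`. -/
def CutVertex (G : SimpleGraph V) (v : V) : Prop :=
  Nat.card G.ConnectedComponent < comps G {v}ᶜ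

/-- A block graph: the vertices of any cycle are pairwise adjacent. -/
def IsBlockGraph (G : SimpleGraph V) : Prop :=
  ∀ (v : V) (c : G.Walk v v), c.IsCycle →
    ∀ a ∈ c.support, ∀ b ∈ c.support, a = b ∨ G.Adj a b

/-- `G_v`: the graph obtained from `G` by completing the neighbourhood of `v`. -/
def completeNbhd (G : SimpleGraph V) (v : V) : SimpleGraph V :=
  G ⊔ SimpleGraph.fromRel (fun a b => G.Adj v a ∧ G.Adj v b)

/-- `C(G)` for the graph `G` restricted to ground vertex set `W`. -/
def cutSets (G : SimpleGraph V) (W : Set V) : Set (Set V) :=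
  {S | S ⊆ W ∧ (S = ∅ ∨ ∀ w ∈ S, comps G (W \ (S \ {w})) < comps G (W \ S))}

open SimpleGraph

private lemma eq_of_reachable' {α : Type*} {β : Sort*} (G : SimpleGraph α) (f : α → β)
    (h : ∀ a b, G.Adj a b → f a = f b) {a b : α} (r : G.Reachable a b) : f a = f b := by
  obtain ⟨p⟩ := r
  induction p with
  | nil => rfl
  | cons hadj _ ih => exact (h _ _ hadj).trans ih

/-- Two graphs connected by vertex maps preserving reachability in both directions
(up to homotopy) have the same number of connected components. -/
private lemma card_comp_eq {α β : Type*} (G1 : SimpleGraph α) (G2 : SimpleGraph β)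
    (φ : α → β) (ψ : β → α)
    (hφ : ∀ a b, G1.Adj a b → G2.Reachable (φ a) (φ b))
    (hψ : ∀ a b, G2.Adj a b → G1.Reachable (ψ a) (ψ b))
    (h1 : ∀ a, G1.Reachable (ψ (φ a)) a)
    (h2 : ∀ b, G2.Reachable (φ (ψ b)) b) :
    Nat.card G1.ConnectedComponent = Nat.card G2.ConnectedComponent := by
  refine Nat.card_congr ⟨
    Quot.lift (fun a => G2.connectedComponentMk (φ a))
      (fun a b r => eq_of_reachable' G1 _
        (fun a b hab => ConnectedComponent.sound (hφ a b hab)) r),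
    Quot.lift (fun b => G1.connectedComponentMk (ψ b))
      (fun a b r => eq_of_reachable' G2 _
        (fun a b hab => ConnectedComponent.sound (hψ a b hab)) r),
    ?_, ?_⟩
  · refine ConnectedComponent.ind ?_
    intro a
    exact ConnectedComponent.sound (h1 a)
  · refine ConnectedComponent.ind ?_
    intro b
    exact ConnectedComponent.sound (h2 b)

/-- Removing an isolated vertex decreases the component count by exactly one. -/
private lemma card_comp_isolated {α : Type*} [Finite α] (Γ : SimpleGraph α) (u : α)
    (hu : ∀ y, ¬ Γ.Adj u y) :
    Nat.card Γ.ConnectedComponent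
      = Nat.card ((Γ.induce {x | x ≠ u}).ConnectedComponent) + 1 := by
  classical
  have hadj : ∀ a b : α, Γ.Adj a b →
      (fun x : α => if hx : x = u
        then (Sum.inr () : (Γ.induce {x | x ≠ u}).ConnectedComponent ⊕ Unit)
        else Sum.inl ((Γ.induce {x | x ≠ u}).connectedComponentMk ⟨x, hx⟩)) a
      = (fun x : α => if hx : x = u
        then (Sum.inr () : (Γ.induce {x | x ≠ u}).ConnectedComponent ⊕ Unit)
        else Sum.inl ((Γ.induce {x | x ≠ u}).connectedComponentMk ⟨x, hx⟩)) b := by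
    intro a b hab
    have ha : a ≠ u := fun h => hu b (h ▸ hab)
    have hb : b ≠ u := fun h => hu a (h ▸ hab.symm)
    dsimp only
    rw [dif_neg ha, dif_neg hb]
    exact congrArg Sum.inl (ConnectedComponent.sound
      (Adj.reachable (show (Γ.induce {x | x ≠ u}).Adj ⟨a, ha⟩ ⟨b, hb⟩ from hab)))
  have e : Γ.ConnectedComponent ≃ ((Γ.induce {x | x ≠ u}).ConnectedComponent ⊕ Unit) := by
    refine ⟨Quot.lift _ (fun a b r => eq_of_reachable' Γ _ hadj r),
      Sum.elim (Quot.lift (fun y => Γ.connectedComponentMk y.1)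
        (fun a b r => eq_of_reachable' _ _
          (fun a b hab => ConnectedComponent.sound (Adj.reachable (hab : Γ.Adj a.1 b.1))) r))
        (fun _ => Γ.connectedComponentMk u), ?_, ?_⟩
    · refine ConnectedComponent.ind ?_
      intro x
      by_cases hx : x = u
      · show Sum.elim _ _ (dite (x = u) _ _) = _
        rw [dif_pos hx]
        show Γ.connectedComponentMk u = Γ.connectedComponentMk x
        rw [hx]
      · show Sum.elim _ _ (dite (x = u) _ _) = _
        rw [dif_neg hx]
        rfl
    · rintro (c | u')
      · revert c
        refine ConnectedComponent.ind ?_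
        intro y
        show (dite (y.1 = u) _ _ : _ ⊕ Unit) = _
        rw [dif_neg y.2]
      · show (dite (u = u) _ _ : _ ⊕ Unit) = _
        rw [dif_pos rfl]
  rw [Nat.card_congr e, Nat.card_sum]
  simp

/-- Generic component-counting lemma used for both the completed graph and
single-neighbour situations. -/
private lemma comps_aux (G' K : SimpleGraph V) {A : Set V} {v a0 : V}
    (hvA : v ∉ A) (ha0 : a0 ∈ A)
    (hKG : ∀ a b : V, a ∈ A → b ∈ A → K.Adj a b → G'.Adj a b ∨ (G'.Adj v a ∧ G'.Adj v b))
    (hGK : ∀ a b : V, a ∈ A → b ∈ A → G'.Adj a b → K.Adj a b)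
    (hva : ∀ a : V, a ∈ A → G'.Adj v a → a = a0 ∨ K.Adj a a0)
    (hv0 : G'.Adj v a0) :
    comps K A = comps G' (A ∪ {v}) := by
  classical
  have hmem : ∀ a : V, a ∈ A → a ∈ A ∪ {v} := fun a ha => Or.inl ha
  have hvmem : v ∈ A ∪ {v} := Or.inr rfl
  have hxv : ∀ x : ↥(A ∪ {v}), x.1 ∉ A → x.1 = v := by
    intro x hx
    rcases x.2 with h | h
    · exact absurd h hx
    · exact h
  refine card_comp_eq (K.induce A) (G'.induce (A ∪ {v}))
    (fun a => ⟨a.1, hmem _ a.2⟩)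
    (fun x => if hx : x.1 ∈ A then ⟨x.1, hx⟩ else ⟨a0, ha0⟩)
    ?_ ?_ ?_ ?_
  · intro a b hab
    have hab' : K.Adj a.1 b.1 := hab
    rcases hKG _ _ a.2 b.2 hab' with h | ⟨hl, hr⟩
    · exact Adj.reachable
        (show (G'.induce (A ∪ {v})).Adj ⟨a.1, hmem _ a.2⟩ ⟨b.1, hmem _ b.2⟩ from h)
    · exact (Adj.reachable
        (show (G'.induce (A ∪ {v})).Adj ⟨a.1, hmem _ a.2⟩ ⟨v, hvmem⟩ from hl.symm)).trans
        (Adj.reachable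
          (show (G'.induce (A ∪ {v})).Adj ⟨v, hvmem⟩ ⟨b.1, hmem _ b.2⟩ from hr))
  · intro x y hxy
    have hxy' : G'.Adj x.1 y.1 := hxy
    by_cases hx : x.1 ∈ A <;> by_cases hy : y.1 ∈ A
    · rw [dif_pos hx, dif_pos hy]
      exact Adj.reachable (show (K.induce A).Adj ⟨x.1, hx⟩ ⟨y.1, hy⟩ from hGK _ _ hx hy hxy')
    · rw [dif_pos hx, dif_neg hy]
      have hadj : G'.Adj v x.1 := by
        have h := hxv y hy; rw [h] at hxy'; exact hxy'.symm
      rcases hva _ hx hadj with h | h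
      · have : (⟨x.1, hx⟩ : ↥A) = ⟨a0, ha0⟩ := Subtype.ext h
        rw [this]
      · exact Adj.reachable (show (K.induce A).Adj ⟨x.1, hx⟩ ⟨a0, ha0⟩ from h)
    · rw [dif_neg hx, dif_pos hy]
      have hadj : G'.Adj v y.1 := by
        have h := hxv x hx; rw [h] at hxy'; exact hxy'
      rcases hva _ hy hadj with h | h
      · have : (⟨y.1, hy⟩ : ↥A) = ⟨a0, ha0⟩ := Subtype.ext h
        rw [this]
      · exact (Adj.reachable
          (show (K.induce A).Adj ⟨y.1, hy⟩ ⟨a0, ha0⟩ from h)).symm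
    · exact absurd ((hxv x hx).trans (hxv y hy).symm) hxy'.ne
  · intro a
    dsimp only
    rw [dif_pos a.2]
  · intro x
    by_cases hx : x.1 ∈ A
    · rw [dif_pos hx]
    · rw [dif_neg hx]
      refine Adj.reachable ?_
      show G'.Adj a0 x.1
      rw [hxv x hx]
      exact hv0.symm

/-- Adding an isolated vertex increases the component count by one. -/
private lemma comps_insert_isolated (G' : SimpleGraph V) {A : Set V} {v : V}
    (hvA : v ∉ A) (hiso : ∀ a ∈ A, ¬ G'.Adj v a) :
    comps G' (A ∪ {v}) = comps G' A + 1 := by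
  classical
  have hvmem : v ∈ A ∪ {v} := Or.inr rfl
  have hxv : ∀ x : ↥(A ∪ {v}), x.1 ∉ A → x.1 = v := by
    intro x hx
    rcases x.2 with h | h
    · exact absurd h hx
    · exact h
  have hu : ∀ y : ↥(A ∪ {v}), ¬ (G'.induce (A ∪ {v})).Adj ⟨v, hvmem⟩ y := by
    intro y hy
    have hy' : G'.Adj v y.1 := hy
    by_cases h : y.1 ∈ A
    · exact hiso _ h hy'
    · exact hy'.ne ((hxv y h).symm)
  have key := card_comp_isolated (G'.induce (A ∪ {v})) ⟨v, hvmem⟩ hu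
  have hA : ∀ z : {x : ↥(A ∪ {v}) // x ≠ ⟨v, hvmem⟩}, z.1.1 ∈ A := by
    intro z
    by_cases h : z.1.1 ∈ A
    · exact h
    · exact absurd (Subtype.ext (hxv z.1 h)) z.2
  have e : Nat.card (((G'.induce (A ∪ {v})).induce
        {x | x ≠ (⟨v, hvmem⟩ : ↥(A ∪ {v}))}).ConnectedComponent)
      = Nat.card ((G'.induce A).ConnectedComponent) := by
    refine card_comp_eq _ _
      (fun z => (⟨z.1.1, hA z⟩ : ↥A))
      (fun a => ⟨⟨a.1, Or.inl a.2⟩, fun h => hvA (by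
        have h' : a.1 = v := congrArg Subtype.val h
        exact h' ▸ a.2)⟩)
      ?_ ?_ ?_ ?_
    · intro a b hab
      exact Adj.reachable (show (G'.induce A).Adj ⟨a.1.1, hA a⟩ ⟨b.1.1, hA b⟩ from hab)
    · intro a b hab
      exact Adj.reachable hab
    · intro a
      exact Reachable.refl _
    · intro b
      exact Reachable.refl _
  show Nat.card _ = Nat.card _ + 1
  rw [key, e]

/-- If no neighbour of `v` lies in `A`, the completed graph agrees with `G` on `A`. -/
private lemma comps_completeNbhd_eq (G : SimpleGraph V) (v : V) {A : Set V}
    (hN : ∀ a ∈ A, ¬ G.Adj v a) : comps (completeNbhd G v) A = comps G A := by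
  have h : (completeNbhd G v).induce A = G.induce A := by
    ext a b
    show (completeNbhd G v).Adj a.1 b.1 ↔ G.Adj a.1 b.1
    simp only [completeNbhd, sup_adj, fromRel_adj]
    constructor
    · rintro (h | ⟨_, ⟨h1, h2⟩ | ⟨h1, h2⟩⟩)
      · exact h
      · exact absurd h1 (hN _ a.2)
      · exact absurd h2 (hN _ a.2)
    · exact Or.inl
  show Nat.card _ = Nat.card _
  rw [h]

private lemma diff_union_singleton {v : V} {T : Set V} (hT : v ∉ T) :
    ({v}ᶜ \ T : Set V) ∪ {v} = Set.univ \ T := by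
  ext x
  rcases eq_or_ne x v with rfl | h
  · simp [hT]
  · simp [h]

private lemma comps_univ (G : SimpleGraph V) :
    comps G Set.univ = Nat.card G.ConnectedComponent :=
  Nat.card_congr (SimpleGraph.induceUnivIso G).connectedComponentEquiv

private lemma exists_adj_of_cutVertex (G : SimpleGraph V) (v : V) (hv : CutVertex G v) :
    ∃ x, G.Adj v x := by
  by_contra h
  push_neg at h
  have h1 : comps G (({v}ᶜ : Set V) ∪ {v}) = comps G {v}ᶜ + 1 :=
    comps_insert_isolated G (by simp) (fun a _ => h a)
  rw [show (({v}ᶜ : Set V) ∪ {v}) = Set.univ by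
    ext y; rcases eq_or_ne y v with rfl | h <;> simp [h], comps_univ] at h1
  unfold CutVertex at hv
  omega

/-- Key identity: if some neighbour of `v` avoids `T`, then the component count of
`H = G_v \ v` on `{v}ᶜ \ T` equals that of `G` on `univ \ T`. -/
private lemma comps_key (G : SimpleGraph V) (v : V) {T : Set V} {x : V}
    (hvT : v ∉ T) (hx : G.Adj v x) (hxT : x ∉ T) :
    comps (completeNbhd G v) ({v}ᶜ \ T) = comps G (Set.univ \ T) := by
  have hvA : v ∉ ({v}ᶜ \ T : Set V) := fun h => h.1 rfl
  have ha0 : x ∈ ({v}ᶜ \ T : Set V) := ⟨hx.ne', hxT⟩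
  have := comps_aux G (completeNbhd G v) hvA ha0
    (hKG := by
      intro a b _ _ hab
      rcases hab with h | h
      · exact Or.inl h
      · rw [fromRel_adj] at h
        rcases h.2 with ⟨h1, h2⟩ | ⟨h1, h2⟩
        · exact Or.inr ⟨h1, h2⟩
        · exact Or.inr ⟨h2, h1⟩)
    (hGK := fun a b _ _ h => Or.inl h)
    (hva := by
      intro a _ hadj
      rcases eq_or_ne a x with rfl | hne
      · exact Or.inl rfl
      · exact Or.inr (Or.inr ((fromRel_adj _ _ _).mpr ⟨hne, Or.inl ⟨hadj, hx⟩⟩)))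
    (hv0 := hx)
  rw [this, diff_union_singleton hvT]

/-- For a block graph `G` with a cut vertex `v` satisfying
`C(G \ {v}) = { S \ {v} : S ∈ C(G), v ∈ S }` and `H = G_v \ {v}`, we have
`C(H) = { S ∈ C(G) : v ∉ S and N_G(v) ⊄ S }`. -/
theorem cutSets_completeNbhd_deleteVert
    (G : SimpleGraph V) (hB : IsBlockGraph G) (v : V) (hv : CutVertex G v)
    (hgood : cutSets G {v}ᶜ =
      {S | ∃ T ∈ cutSets G Set.univ, v ∈ T ∧ S = T \ {v}}) :
    cutSets (completeNbhd G v) {v}ᶜ =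
      {S ∈ cutSets G Set.univ | v ∉ S ∧ ¬ G.neighborSet v ⊆ S} := by
  classical
  obtain ⟨x0, hx0⟩ := exists_adj_of_cutVertex G v hv
  ext S
  simp only [cutSets, Set.mem_setOf_eq, Set.mem_sep_iff]
  constructor
  · rintro ⟨hSW, hcond⟩
    have hvS : v ∉ S := fun h => (hSW h) rfl
    by_cases hNS : G.neighborSet v ⊆ S
    · -- contradiction with hgood
      exfalso
      -- `S` is a cut set of `G \ v`
      have hScut : S ∈ cutSets G {v}ᶜ := by
        refine ⟨hSW, ?_⟩
        rcases hcond with rfl | hcond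
        · exact Or.inl rfl
        · refine Or.inr fun w hw => ?_
          have hiso : ∀ a ∈ ({v}ᶜ \ S : Set V), ¬ G.Adj v a :=
            fun a ha hadj => ha.2 (hNS hadj)
          have h1 : comps (completeNbhd G v) ({v}ᶜ \ S) = comps G ({v}ᶜ \ S) :=
            comps_completeNbhd_eq G v hiso
          have h2 : comps (completeNbhd G v) ({v}ᶜ \ (S \ {w})) =
              comps G ({v}ᶜ \ (S \ {w})) := by
            by_cases hwv : G.Adj v w
            · -- use comps_aux twice with a0 = w
              have hvA : v ∉ ({v}ᶜ \ (S \ {w}) : Set V) := fun h => h.1 rfl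
              have ha0 : w ∈ ({v}ᶜ \ (S \ {w}) : Set V) :=
                ⟨fun h => hvS (h ▸ hw), fun h => h.2 rfl⟩
              have hva' : ∀ a : V, a ∈ ({v}ᶜ \ (S \ {w}) : Set V) → G.Adj v a → a = w := by
                intro a ha hadj
                by_contra hne
                exact ha.2 ⟨hNS hadj, hne⟩
              have e1 := comps_aux G (completeNbhd G v) hvA ha0
                (hKG := by
                  intro a b _ _ hab
                  rcases hab with h | h
                  · exact Or.inl h
                  · rw [fromRel_adj] at h
                    rcases h.2 with ⟨h1, h2⟩ | ⟨h1, h2⟩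
                    · exact Or.inr ⟨h1, h2⟩
                    · exact Or.inr ⟨h2, h1⟩)
                (hGK := fun a b _ _ h => Or.inl h)
                (hva := fun a ha hadj => Or.inl (hva' a ha hadj))
                (hv0 := hwv)
              have e2 := comps_aux G G hvA ha0
                (hKG := fun a b _ _ h => Or.inl h)
                (hGK := fun a b _ _ h => h)
                (hva := fun a ha hadj => Or.inl (hva' a ha hadj))
                (hv0 := hwv)
              rw [e1, ← e2]
            · refine comps_completeNbhd_eq G v ?_
              intro a ha hadj
              have haS : a ∈ S := hNS hadj
              have : a = w := by
                by_contra hne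
                exact ha.2 ⟨haS, hne⟩
              exact hwv (this ▸ hadj)
          rw [← h1, ← h2]
          exact hcond w hw
      rw [hgood] at hScut
      obtain ⟨T, hTcut, hvT, hST⟩ := hScut
      have hTS : T = S ∪ {v} := by
        rw [hST]
        ext y
        rcases eq_or_ne y v with rfl | h
        · simp [hvT]
        · simp [h]
      rcases hTcut.2 with hTe | hTcond
      · exact (hTe ▸ hvT : v ∈ (∅ : Set V))
      · have hTv := hTcond v hvT
        have hTd : T \ {v} = S := hST.symm
        have hUT : Set.univ \ T = {v}ᶜ \ S := by
          rw [hTS]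
          ext y
          rcases eq_or_ne y v with rfl | h
          · simp
          · simp [h]
        rw [hTd, hUT] at hTv
        -- comps G (univ \ S) = comps G ({v}ᶜ \ S) + 1 since v is isolated there
        have hiso : ∀ a ∈ ({v}ᶜ \ S : Set V), ¬ G.Adj v a :=
          fun a ha hadj => ha.2 (hNS hadj)
        have h3 : comps G (({v}ᶜ \ S : Set V) ∪ {v}) = comps G ({v}ᶜ \ S) + 1 :=
          comps_insert_isolated G (fun h => h.1 rfl) hiso
        rw [diff_union_singleton hvS] at h3
        omega
    · -- the main, regular case
      refine ⟨⟨Set.subset_univ _, ?_⟩, hvS, hNS⟩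
      rcases hcond with rfl | hcond
      · exact Or.inl rfl
      · refine Or.inr fun w hw => ?_
        obtain ⟨x, hxN, hxS⟩ := Set.not_subset.mp hNS
        have hxadj : G.Adj v x := hxN
        rw [← comps_key G v (fun h => hvS h.1) hxadj (fun h => hxS h.1),
            ← comps_key G v hvS hxadj hxS]
        exact hcond w hw
  · rintro ⟨⟨-, hcond⟩, hvS, hNS⟩
    obtain ⟨x, hxN, hxS⟩ := Set.not_subset.mp hNS
    have hxadj : G.Adj v x := hxN
    have hSW : S ⊆ ({v}ᶜ : Set V) := fun a ha h => hvS (h ▸ ha)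
    refine ⟨hSW, ?_⟩
    rcases hcond with rfl | hcond
    · exact Or.inl rfl
    · refine Or.inr fun w hw => ?_
      rw [comps_key G v (fun h => hvS h.1) hxadj (fun h => hxS h.1),
          comps_key G v hvS hxadj hxS]
      exact hcond w hw
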